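/- The map L₃ defined on v𝔽 = {F ∈ 𝔽 : hF = 0 and ω(F) = 0} by L₃(F) = F₂(F) − F₁(F) is an involutive linear isometry of v𝔽 commuting with the action on 𝔽 of every linear isometry A of V with A∘φ = φ∘A and Aξ = ξ, and it yields the orthogonal decomposition v𝔽 = 𝔽₈ ⊕ (v𝔽)′, where 𝔽₈ = {F ∈ 𝔽 : hF = 0 and F(x,y,ξ) = 0 for all x,y} is the (−1)-eigenspace and (v𝔽)′ = {F ∈ 𝔽 : hF = 0 and F(ξ,y,z) = 0 for all y,z} is the (+1)-eigenspace; the components of F ∈ v𝔽 in 𝔽₈ and (v𝔽)′ are F₁(F) and F₂(F) respectively. -/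
import Mathlib


open scoped BigOperators RealInnerProductSpace

noncomputable section

variable {V : Type*} [NormedAddCommGroup V] [InnerProductSpace ℝ V]

/-- A map `V → V → V → ℝ` linear in each of its three arguments. -/
def Trilinear (F : V → V → V → ℝ) : Prop :=
  (∀ y z, IsLinearMap ℝ fun x => F x y z) ∧
  (∀ x z, IsLinearMap ℝ fun y => F x y z) ∧
  (∀ x y, IsLinearMap ℝ fun z => F x y z)

/-- Almost contact metric structure `(φ, ξ, η, g)` on `V` with `dim V = 2n+1`. -/
def ACM (n : ℕ) (φ : V →ₗ[ℝ] V) (ξ : V) (η : V →ₗ[ℝ] ℝ) : Prop :=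
  Module.finrank ℝ V = 2 * n + 1 ∧
  (∀ x, φ (φ x) = -x + η x • ξ) ∧
  φ ξ = 0 ∧
  (∀ x, η (φ x) = 0) ∧
  ⟪ξ, ξ⟫ = 1 ∧
  (∀ x y, ⟪φ x, φ y⟫ = ⟪x, y⟫ - η x * η y)

/-- Membership in the space `𝔽` of trilinear forms with the symmetries (1). -/
def InF (φ : V →ₗ[ℝ] V) (ξ : V) (η : V →ₗ[ℝ] ℝ) (F : V → V → V → ℝ) : Prop :=
  Trilinear F ∧
  (∀ x y z, F x y z = -F x z y) ∧
  (∀ x y z, F x y z = -F x (φ y) (φ z) + η y * F x ξ z + η z * F x y ξ)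

/-- `h x = -φ²x`. -/
def hMap (φ : V →ₗ[ℝ] V) (x : V) : V := -φ (φ x)

/-- `hF(x,y,z) = F(hx,hy,hz)`. -/
def hF (φ : V →ₗ[ℝ] V) (F : V → V → V → ℝ) : V → V → V → ℝ :=
  fun x y z => F (hMap φ x) (hMap φ y) (hMap φ z)

def F1 (ξ : V) (η : V →ₗ[ℝ] ℝ) (F : V → V → V → ℝ) : V → V → V → ℝ :=
  fun x y z => η x * F ξ y z

def F2 (ξ : V) (η : V →ₗ[ℝ] ℝ) (F : V → V → V → ℝ) : V → V → V → ℝ :=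
  fun x y z => η y * F x ξ z - η z * F x ξ y

def F3 (ξ : V) (η : V →ₗ[ℝ] ℝ) (F : V → V → V → ℝ) : V → V → V → ℝ :=
  fun x y z => η x * η y * F ξ ξ z - η x * η z * F ξ ξ y

def F4 (φ : V →ₗ[ℝ] V) (ξ : V) (η : V →ₗ[ℝ] ℝ) (F : V → V → V → ℝ) : V → V → V → ℝ :=
  fun x y z => η y * F (φ x) ξ (φ z) - η z * F (φ x) ξ (φ y)

def F5 (ξ : V) (η : V →ₗ[ℝ] ℝ) (F : V → V → V → ℝ) : V → V → V → ℝ :=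
  fun x y z => η y * F z ξ x - η z * F y ξ x

def F6 (φ : V →ₗ[ℝ] V) (ξ : V) (η : V →ₗ[ℝ] ℝ) (F : V → V → V → ℝ) : V → V → V → ℝ :=
  fun x y z => η y * F (φ z) ξ (φ x) - η z * F (φ y) ξ (φ x)

/-- `f(F)(z) = Σᵢ F(eᵢ, eᵢ, z)`. -/
def fTr {ι : Type*} [Fintype ι] (e : OrthonormalBasis ι ℝ V) (F : V → V → V → ℝ) (z : V) : ℝ :=
  ∑ i, F (e i) (e i) z

/-- `f*(F)(z) = Σᵢ F(eᵢ, φ eᵢ, z)`. -/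
def fTrStar {ι : Type*} [Fintype ι] (φ : V →ₗ[ℝ] V) (e : OrthonormalBasis ι ℝ V)
    (F : V → V → V → ℝ) (z : V) : ℝ :=
  ∑ i, F (e i) (φ (e i)) z

/-- The inner product on `𝔽`: `⟨F,G⟩ = Σ_{i,j,k} F(eᵢ,eⱼ,e_k) G(eᵢ,eⱼ,e_k)`. -/
def innerF {ι : Type*} [Fintype ι] (e : OrthonormalBasis ι ℝ V) (F G : V → V → V → ℝ) : ℝ :=
  ∑ i, ∑ j, ∑ k, F (e i) (e j) (e k) * G (e i) (e j) (e k)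

def F7 (n : ℕ) {ι : Type*} [Fintype ι] (e : OrthonormalBasis ι ℝ V) (ξ : V) (η : V →ₗ[ℝ] ℝ)
    (F : V → V → V → ℝ) : V → V → V → ℝ :=
  fun x y z => (1 / (2 * (n : ℝ))) * fTr e F ξ * (η z * ⟪x, y⟫ - η y * ⟪x, z⟫)

def F8 (n : ℕ) (φ : V →ₗ[ℝ] V) {ι : Type*} [Fintype ι] (e : OrthonormalBasis ι ℝ V) (ξ : V)
    (η : V →ₗ[ℝ] ℝ) (F : V → V → V → ℝ) : V → V → V → ℝ :=
  fun x y z => -(1 / (2 * (n : ℝ))) * fTrStar φ e F ξ * (η z * ⟪x, φ y⟫ - η y * ⟪x, φ z⟫)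

def F9 (n : ℕ) (φ : V →ₗ[ℝ] V) {ι : Type*} [Fintype ι] (e : OrthonormalBasis ι ℝ V)
    (F : V → V → V → ℝ) : V → V → V → ℝ :=
  fun x y z => (1 / (2 * ((n : ℝ) - 1))) *
    (⟪hMap φ x, hMap φ y⟫ * fTr e F z - ⟪hMap φ x, hMap φ z⟫ * fTr e F y
      - ⟪x, φ y⟫ * fTr e F (φ z) + ⟪x, φ z⟫ * fTr e F (φ y))

def F10 (φ : V →ₗ[ℝ] V) (F : V → V → V → ℝ) : V → V → V → ℝ :=
  fun x y z => (1 / 2) * (F x y z + F (φ x) (φ y) z)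

def F11 (φ : V →ₗ[ℝ] V) (F : V → V → V → ℝ) : V → V → V → ℝ :=
  fun x y z => (1 / 6) * (F x y z + F y z x + F z x y
    - F (φ x) (φ y) z - F (φ y) (φ z) x - F (φ z) (φ x) y)

def F12 (φ : V →ₗ[ℝ] V) (F : V → V → V → ℝ) : V → V → V → ℝ :=
  fun x y z => (1 / 2) * (F x y z - F (φ x) (φ y) z)

/-- The action of a linear isometry `A` of `V` on trilinear forms:
`(A·F)(x,y,z) = F(A⁻¹x, A⁻¹y, A⁻¹z)`. -/
def actA (A : V ≃ₗᵢ[ℝ] V) (F : V → V → V → ℝ) : V → V → V → ℝ :=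
  fun x y z => F (A.symm x) (A.symm y) (A.symm z)

def L1 (ξ : V) (η : V →ₗ[ℝ] ℝ) (F : V → V → V → ℝ) : V → V → V → ℝ :=
  fun x y z => F x y z - 2 * F3 ξ η F x y z

def L2 (ξ : V) (η : V →ₗ[ℝ] ℝ) (F : V → V → V → ℝ) : V → V → V → ℝ :=
  fun x y z => F x y z - 2 * (F1 ξ η F x y z + F2 ξ η F x y z)

def L3 (ξ : V) (η : V →ₗ[ℝ] ℝ) (F : V → V → V → ℝ) : V → V → V → ℝ :=
  fun x y z => F2 ξ η F x y z - F1 ξ η F x y z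

def L4 (φ : V →ₗ[ℝ] V) (ξ : V) (η : V →ₗ[ℝ] ℝ) (F : V → V → V → ℝ) : V → V → V → ℝ :=
  fun x y z => -F4 φ ξ η F x y z

def L5 (ξ : V) (η : V →ₗ[ℝ] ℝ) (F : V → V → V → ℝ) : V → V → V → ℝ :=
  fun x y z => -F5 ξ η F x y z

def L6 (n : ℕ) {ι : Type*} [Fintype ι] (e : OrthonormalBasis ι ℝ V) (ξ : V) (η : V →ₗ[ℝ] ℝ)
    (F : V → V → V → ℝ) : V → V → V → ℝ :=
  fun x y z => F x y z - 2 * F7 n e ξ η F x y z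

def L7 (n : ℕ) (φ : V →ₗ[ℝ] V) {ι : Type*} [Fintype ι] (e : OrthonormalBasis ι ℝ V) (ξ : V)
    (η : V →ₗ[ℝ] ℝ) (F : V → V → V → ℝ) : V → V → V → ℝ :=
  fun x y z => F x y z - 2 * F8 n φ e ξ η F x y z

/-- The subspace `𝔽₁ = {F ∈ 𝔽 : F = F₃(F)}`. -/
def MemF1sub (φ : V →ₗ[ℝ] V) (ξ : V) (η : V →ₗ[ℝ] ℝ) (F : V → V → V → ℝ) : Prop :=
  InF φ ξ η F ∧ F = F3 ξ η F

/-- The subspace `v𝔽 = {F ∈ 𝔽 : hF = 0, ω(F) = 0}`. -/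
def MemVF (φ : V →ₗ[ℝ] V) (ξ : V) (η : V →ₗ[ℝ] ℝ) (F : V → V → V → ℝ) : Prop :=
  InF φ ξ η F ∧ hF φ F = 0 ∧ ∀ z, F ξ ξ z = 0

/-- The subspace `h𝔽 = {F ∈ 𝔽 : F₁(F) = F₂(F) = 0}`. -/
def MemHF (φ : V →ₗ[ℝ] V) (ξ : V) (η : V →ₗ[ℝ] ℝ) (F : V → V → V → ℝ) : Prop :=
  InF φ ξ η F ∧ F1 ξ η F = 0 ∧ F2 ξ η F = 0

/-- The subspace `(v𝔽)′ = {F ∈ 𝔽 : hF = 0, F(ξ,·,·) = 0}`. -/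
def MemVF' (φ : V →ₗ[ℝ] V) (ξ : V) (η : V →ₗ[ℝ] ℝ) (F : V → V → V → ℝ) : Prop :=
  InF φ ξ η F ∧ hF φ F = 0 ∧ ∀ y z, F ξ y z = 0

/-- The subspace `𝔽₈ = {F ∈ 𝔽 : hF = 0, F(·,·,ξ) = 0}`. -/
def MemF8sub (φ : V →ₗ[ℝ] V) (ξ : V) (η : V →ₗ[ℝ] ℝ) (F : V → V → V → ℝ) : Prop :=
  InF φ ξ η F ∧ hF φ F = 0 ∧ ∀ x y, F x y ξ = 0

/-- The subspace `𝒩 = {F ∈ (v𝔽)′ : F = F₄(F)}`. -/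
def MemN (φ : V →ₗ[ℝ] V) (ξ : V) (η : V →ₗ[ℝ] ℝ) (F : V → V → V → ℝ) : Prop :=
  MemVF' φ ξ η F ∧ F = F4 φ ξ η F

/-- The subspace `𝒩̃ = {F ∈ (v𝔽)′ : F = -F₄(F)}`. -/
def MemNt (φ : V →ₗ[ℝ] V) (ξ : V) (η : V →ₗ[ℝ] ℝ) (F : V → V → V → ℝ) : Prop :=
  MemVF' φ ξ η F ∧ F = -F4 φ ξ η F

/-- The subspace `𝒬𝒮𝔽 = {F ∈ (v𝔽)′ : F = F₄(F) = F₅(F)}`. -/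
def MemQS (φ : V →ₗ[ℝ] V) (ξ : V) (η : V →ₗ[ℝ] ℝ) (F : V → V → V → ℝ) : Prop :=
  MemVF' φ ξ η F ∧ F = F4 φ ξ η F ∧ F = F5 ξ η F

/-- The subspace `𝒬𝒦𝔽 = {F ∈ (v𝔽)′ : F = F₄(F) = -F₅(F)}`. -/
def MemQK (φ : V →ₗ[ℝ] V) (ξ : V) (η : V →ₗ[ℝ] ℝ) (F : V → V → V → ℝ) : Prop :=
  MemVF' φ ξ η F ∧ F = F4 φ ξ η F ∧ F = -F5 ξ η F

/-- The subspace `𝔽₆ = {F ∈ (v𝔽)′ : F = -F₄(F) = F₅(F)}`. -/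
def MemF6sub (φ : V →ₗ[ℝ] V) (ξ : V) (η : V →ₗ[ℝ] ℝ) (F : V → V → V → ℝ) : Prop :=
  MemVF' φ ξ η F ∧ F = -F4 φ ξ η F ∧ F = F5 ξ η F

/-- The subspace `𝔽₇ = {F ∈ (v𝔽)′ : F = -F₄(F) = -F₅(F)}`. -/
def MemF7sub (φ : V →ₗ[ℝ] V) (ξ : V) (η : V →ₗ[ℝ] ℝ) (F : V → V → V → ℝ) : Prop :=
  MemVF' φ ξ η F ∧ F = -F4 φ ξ η F ∧ F = -F5 ξ η F

/-- The subspace `𝔽₂ = {F ∈ 𝔽 : F = F₇(F)}`. -/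
def MemF2sub (n : ℕ) {ι : Type*} [Fintype ι] (e : OrthonormalBasis ι ℝ V) (φ : V →ₗ[ℝ] V)
    (ξ : V) (η : V →ₗ[ℝ] ℝ) (F : V → V → V → ℝ) : Prop :=
  InF φ ξ η F ∧ F = F7 n e ξ η F

/-- The subspace `𝔽₃ = {F ∈ 𝔽 : F = F₈(F)}`. -/
def MemF3sub (n : ℕ) {ι : Type*} [Fintype ι] (e : OrthonormalBasis ι ℝ V) (φ : V →ₗ[ℝ] V)
    (ξ : V) (η : V →ₗ[ℝ] ℝ) (F : V → V → V → ℝ) : Prop :=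
  InF φ ξ η F ∧ F = F8 n φ e ξ η F

/-- The subspace `𝔽₄ = {F ∈ 𝔽 : F = F₄(F) = F₅(F), f(F)(ξ) = 0}`. -/
def MemF4sub (n : ℕ) {ι : Type*} [Fintype ι] (e : OrthonormalBasis ι ℝ V) (φ : V →ₗ[ℝ] V)
    (ξ : V) (η : V →ₗ[ℝ] ℝ) (F : V → V → V → ℝ) : Prop :=
  InF φ ξ η F ∧ F = F4 φ ξ η F ∧ F = F5 ξ η F ∧ fTr e F ξ = 0

/-- The subspace `𝔽₅ = {F ∈ 𝔽 : F = F₄(F) = -F₅(F), f*(F)(ξ) = 0}`. -/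
def MemF5sub (n : ℕ) {ι : Type*} [Fintype ι] (e : OrthonormalBasis ι ℝ V) (φ : V →ₗ[ℝ] V)
    (ξ : V) (η : V →ₗ[ℝ] ℝ) (F : V → V → V → ℝ) : Prop :=
  InF φ ξ η F ∧ F = F4 φ ξ η F ∧ F = -F5 ξ η F ∧ fTrStar φ e F ξ = 0

/-- The subspace `𝔽₄ = {F ∈ (v𝔽)′ : F = F₄(F) = F₅(F), f(F)(ξ) = 0}`. -/
def MemF4sub' (n : ℕ) {ι : Type*} [Fintype ι] (e : OrthonormalBasis ι ℝ V) (φ : V →ₗ[ℝ] V)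
    (ξ : V) (η : V →ₗ[ℝ] ℝ) (F : V → V → V → ℝ) : Prop :=
  MemVF' φ ξ η F ∧ F = F4 φ ξ η F ∧ F = F5 ξ η F ∧ fTr e F ξ = 0

/-- The subspace `𝔽₅ = {F ∈ (v𝔽)′ : F = F₄(F) = -F₅(F), f*(F)(ξ) = 0}`. -/
def MemF5sub' (n : ℕ) {ι : Type*} [Fintype ι] (e : OrthonormalBasis ι ℝ V) (φ : V →ₗ[ℝ] V)
    (ξ : V) (η : V →ₗ[ℝ] ℝ) (F : V → V → V → ℝ) : Prop :=
  MemVF' φ ξ η F ∧ F = F4 φ ξ η F ∧ F = -F5 ξ η F ∧ fTrStar φ e F ξ = 0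

/-- The subspace `𝔽₉ = {F ∈ 𝔽 : F = hF = F₉(F)}`. -/
def MemF9sub (n : ℕ) {ι : Type*} [Fintype ι] (e : OrthonormalBasis ι ℝ V) (φ : V →ₗ[ℝ] V)
    (ξ : V) (η : V →ₗ[ℝ] ℝ) (F : V → V → V → ℝ) : Prop :=
  InF φ ξ η F ∧ F = hF φ F ∧ F = F9 n φ e F

/-- The subspace `𝔽₁₀ = {F ∈ 𝔽 : F = hF = F₁₀(F) - F₉(F)}`. -/
def MemF10sub (n : ℕ) {ι : Type*} [Fintype ι] (e : OrthonormalBasis ι ℝ V) (φ : V →ₗ[ℝ] V)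
    (ξ : V) (η : V →ₗ[ℝ] ℝ) (F : V → V → V → ℝ) : Prop :=
  InF φ ξ η F ∧ F = hF φ F ∧ F = F10 φ F - F9 n φ e F

/-- The subspace `𝔽₁₁ = {F ∈ 𝔽 : F = hF = F₁₁(F)}`. -/
def MemF11sub (φ : V →ₗ[ℝ] V) (ξ : V) (η : V →ₗ[ℝ] ℝ) (F : V → V → V → ℝ) : Prop :=
  InF φ ξ η F ∧ F = hF φ F ∧ F = F11 φ F

/-- The subspace `𝔽₁₂ = {F ∈ 𝔽 : F = hF = F₁₂(F) - F₁₁(F)}`. -/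
def MemF12sub (φ : V →ₗ[ℝ] V) (ξ : V) (η : V →ₗ[ℝ] ℝ) (F : V → V → V → ℝ) : Prop :=
  InF φ ξ η F ∧ F = hF φ F ∧ F = F12 φ F - F11 φ F

section AuxL3
variable {n : ℕ} {φ : V →ₗ[ℝ] V} {ξ : V} {η : V →ₗ[ℝ] ℝ}

lemma acm_eta_xi (h : ACM n φ ξ η) : η ξ = 1 := by
  obtain ⟨-, h2, h3, -, h5, -⟩ := h
  have hx : (0 : V) = -ξ + η ξ • ξ := by
    have := h2 ξ; rwa [h3, map_zero] at this
  have hξ0 : ξ ≠ 0 := by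
    intro h0; rw [h0, inner_zero_left] at h5; norm_num at h5
  have h4 : η ξ • ξ = ξ := by
    have := hx.symm
    rwa [neg_add_eq_sub, sub_eq_zero] at this
  have h6 : (η ξ - 1) • ξ = 0 := by rw [sub_smul, one_smul, h4, sub_self]
  rcases smul_eq_zero.mp h6 with h' | h'
  · linarith [sub_eq_zero.mp h']
  · exact absurd h' hξ0

lemma acm_eta_eq (h : ACM n φ ξ η) (x : V) : η x = ⟪x, ξ⟫ := by
  have h6 := h.2.2.2.2.2 x ξ
  rw [h.2.2.1, inner_zero_right, acm_eta_xi h] at h6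
  linarith

lemma acm_hMap (h : ACM n φ ξ η) (x : V) : hMap φ x = x - η x • ξ := by
  rw [hMap, h.2.1 x]; abel

lemma acm_eta_h (h : ACM n φ ξ η) (x : V) : η (hMap φ x) = 0 := by
  rw [acm_hMap h, map_sub, map_smul, acm_eta_xi h]; simp

/-- Key expansion for forms with `hF = 0` and `ω = 0`. -/
lemma keyExp (hac : ACM n φ ξ η) {F : V → V → V → ℝ} (hT : Trilinear F)
    (ha : ∀ x y z, F x y z = -F x z y) (hh : hF φ F = 0) (hw : ∀ z, F ξ ξ z = 0) :
    ∀ x y z, F x y z = η x * F ξ y z + η y * F x ξ z + η z * F x y ξ := by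
  have hxiend : ∀ u, F u ξ ξ = 0 := fun u => by have := ha u ξ ξ; linarith
  have hmidxi : ∀ y, F ξ y ξ = 0 := fun y => by rw [ha ξ y ξ, hw y]; ring
  intro x y z
  have h0 : F (x - η x • ξ) (y - η y • ξ) (z - η z • ξ) = 0 := by
    have := congrFun (congrFun (congrFun hh x) y) z
    rwa [hF, acm_hMap hac, acm_hMap hac, acm_hMap hac] at this
  have m1a : ∀ (u v B C : V), F (u - v) B C = F u B C - F v B C :=
    fun u v B C => (hT.1 B C).map_sub u v
  have m1s : ∀ (a : ℝ) (u B C : V), F (a • u) B C = a * F u B C :=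
    fun a u B C => by rw [(hT.1 B C).map_smul]; rfl
  have m2a : ∀ (A u v C : V), F A (u - v) C = F A u C - F A v C :=
    fun A u v C => (hT.2.1 A C).map_sub u v
  have m2s : ∀ (a : ℝ) (A u C : V), F A (a • u) C = a * F A u C :=
    fun a A u C => by rw [(hT.2.1 A C).map_smul]; rfl
  have m3a : ∀ (A B u v : V), F A B (u - v) = F A B u - F A B v :=
    fun A B u v => (hT.2.2 A B).map_sub u v
  have m3s : ∀ (a : ℝ) (A B u : V), F A B (a • u) = a * F A B u :=
    fun a A B u => by rw [(hT.2.2 A B).map_smul]; rfl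
  simp only [m1a, m1s, m2a, m2s, m3a, m3s, hw, hxiend, hmidxi, mul_zero,
    sub_zero, zero_sub, sub_neg_eq_add] at h0
  linarith [h0]

section Shapes
variable {F G : V → V → V → ℝ}

lemma f8_shape (hac : ACM n φ ξ η) (h8 : MemF8sub φ ξ η F) :
    ∀ x y z, F x y z = η x * F ξ y z := by
  obtain ⟨⟨hT, ha, -⟩, hh, hend⟩ := h8
  have hw : ∀ z, F ξ ξ z = 0 := fun z => by rw [ha ξ ξ z, hend ξ z]; ring
  intro x y z
  have k := keyExp hac hT ha hh hw x y z
  have h1 : F x ξ z = 0 := by rw [ha x ξ z, hend x z]; ring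
  rw [hend x y, h1] at k; linarith

lemma vf'_shape (hac : ACM n φ ξ η) (hv : MemVF' φ ξ η F) :
    ∀ x y z, F x y z = η y * F x ξ z - η z * F x ξ y := by
  obtain ⟨⟨hT, ha, -⟩, hh, hleft⟩ := hv
  have hw : ∀ z, F ξ ξ z = 0 := fun z => hleft ξ z
  intro x y z
  have k := keyExp hac hT ha hh hw x y z
  rw [hleft y z, ha x y ξ] at k; linarith

/-- Decomposition for `F ∈ v𝔽`. -/
lemma vf_shape (hac : ACM n φ ξ η) (hv : MemVF φ ξ η F) :
    ∀ x y z, F x y z = η x * F ξ y z + η y * F x ξ z - η z * F x ξ y := by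
  obtain ⟨⟨hT, ha, -⟩, hh, hw⟩ := hv
  intro x y z
  have k := keyExp hac hT ha hh hw x y z
  rw [ha x y ξ] at k; linarith

lemma innerF_comm {ι : Type*} [Fintype ι] (e : OrthonormalBasis ι ℝ V) :
    innerF e F G = innerF e G F := by
  simp only [innerF, mul_comm]

lemma sum_eta_mul {ι : Type*} [Fintype ι] (hac : ACM n φ ξ η)
    (e : OrthonormalBasis ι ℝ V) (hT : Trilinear G) (y z : V) :
    ∑ i, η (e i) * G (e i) y z = G ξ y z := by
  have hl := hT.1 y z
  have hrep := e.sum_repr' ξ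
  calc ∑ i, η (e i) * G (e i) y z
      = ∑ i, (IsLinearMap.mk' (fun x => G x y z) hl) ((⟪e i, ξ⟫ : ℝ) • e i) := by
        refine Finset.sum_congr rfl fun i _ => ?_
        rw [map_smul, IsLinearMap.mk'_apply, smul_eq_mul, acm_eta_eq hac,
          real_inner_comm]
    _ = (IsLinearMap.mk' (fun x => G x y z) hl) (∑ i, (⟪e i, ξ⟫ : ℝ) • e i) := by
        rw [map_sum]
    _ = G ξ y z := by rw [hrep, IsLinearMap.mk'_apply]

/-- Orthogonality of `𝔽₈` and `(v𝔽)'`. -/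
lemma ortho_f8_vf' {ι : Type*} [Fintype ι] (hac : ACM n φ ξ η)
    (e : OrthonormalBasis ι ℝ V) (h8 : MemF8sub φ ξ η F) (hv : MemVF' φ ξ η G) :
    innerF e F G = 0 := by
  have hFs := f8_shape hac h8
  have hGl := hv.2.2
  have hTG := hv.1.1
  calc innerF e F G
      = ∑ j, ∑ k, ∑ i, F ξ (e j) (e k) * (η (e i) * G (e i) (e j) (e k)) := by
        rw [innerF, Finset.sum_comm]
        refine Finset.sum_congr rfl fun j _ => ?_
        rw [Finset.sum_comm]
        refine Finset.sum_congr rfl fun k _ => Finset.sum_congr rfl fun i _ => ?_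
        rw [hFs (e i) (e j) (e k)]; ring
    _ = ∑ j, ∑ k, F ξ (e j) (e k) * G ξ (e j) (e k) := by
        refine Finset.sum_congr rfl fun j _ => Finset.sum_congr rfl fun k _ => ?_
        rw [← Finset.mul_sum, sum_eta_mul hac e hTG]
    _ = 0 := by
        refine Finset.sum_eq_zero fun j _ => Finset.sum_eq_zero fun k _ => ?_
        rw [hGl]; ring

end Shapes
end AuxL3
section AuxL3b
variable {n : ℕ} {φ : V →ₗ[ℝ] V} {ξ : V} {η : V →ₗ[ℝ] ℝ} {F G : V → V → V → ℝ}

lemma isLinearMap_sub' {W : Type*} [NormedAddCommGroup W] [InnerProductSpace ℝ W]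
    {f g : W → ℝ} (hf : IsLinearMap ℝ f) (hg : IsLinearMap ℝ g) :
    IsLinearMap ℝ (fun x => f x - g x) := by
  refine ⟨fun u v => ?_, fun c u => ?_⟩
  · simp only [hf.map_add, hg.map_add]; ring
  · simp only [hf.map_smul, hg.map_smul, smul_eq_mul]; ring

lemma tri_F1 (hT : Trilinear F) : Trilinear (F1 ξ η F) := by
  refine ⟨fun y z => ⟨fun u v => ?_, fun c u => ?_⟩,
    fun x z => ⟨fun u v => ?_, fun c u => ?_⟩,
    fun x y => ⟨fun u v => ?_, fun c u => ?_⟩⟩ <;> simp only [F1, smul_eq_mul]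
  · rw [map_add]; ring
  · rw [map_smul, smul_eq_mul]; ring
  · rw [(hT.2.1 ξ z).map_add]; ring
  · rw [(hT.2.1 ξ z).map_smul, smul_eq_mul]; ring
  · rw [(hT.2.2 ξ y).map_add]; ring
  · rw [(hT.2.2 ξ y).map_smul, smul_eq_mul]; ring

lemma tri_F2 (hT : Trilinear F) : Trilinear (F2 ξ η F) := by
  refine ⟨fun y z => ⟨fun u v => ?_, fun c u => ?_⟩,
    fun x z => ⟨fun u v => ?_, fun c u => ?_⟩,
    fun x y => ⟨fun u v => ?_, fun c u => ?_⟩⟩ <;> simp only [F2, smul_eq_mul]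
  · rw [(hT.1 ξ z).map_add, (hT.1 ξ y).map_add]; ring
  · rw [(hT.1 ξ z).map_smul, (hT.1 ξ y).map_smul, smul_eq_mul, smul_eq_mul]; ring
  · rw [map_add, (hT.2.2 x ξ).map_add]; ring
  · rw [map_smul, (hT.2.2 x ξ).map_smul, smul_eq_mul, smul_eq_mul]; ring
  · rw [map_add, (hT.2.2 x ξ).map_add]; ring
  · rw [map_smul, (hT.2.2 x ξ).map_smul, smul_eq_mul, smul_eq_mul]; ring

lemma L3_apply (x y z : V) :
    L3 ξ η F x y z = (η y * F x ξ z - η z * F x ξ y) - η x * F ξ y z := rfl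

lemma F1_mem (hac : ACM n φ ξ η) (hv : MemVF φ ξ η F) :
    MemF8sub φ ξ η (F1 ξ η F) := by
  obtain ⟨⟨hT, ha, hrel⟩, hh, hw⟩ := hv
  have hmidxi : ∀ y, F ξ y ξ = 0 := fun y => by rw [ha ξ y ξ, hw y]; ring
  refine ⟨⟨tri_F1 hT, ?_, ?_⟩, ?_, ?_⟩
  · intro x y z; simp only [F1]
    linear_combination η x * ha ξ y z
  · intro x y z; simp only [F1]
    linear_combination η x * hrel ξ y z
  · funext x y z
    simp [hF, F1, acm_eta_h hac]
  · intro x y; simp only [F1, hmidxi y, mul_zero]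

lemma F2_mem (hac : ACM n φ ξ η) (hv : MemVF φ ξ η F) :
    MemVF' φ ξ η (F2 ξ η F) := by
  obtain ⟨⟨hT, ha, hrel⟩, hh, hw⟩ := hv
  have hηφ := hac.2.2.2.1
  have hξ1 := acm_eta_xi hac
  have hxiend : ∀ u, F u ξ ξ = 0 := fun u => by have := ha u ξ ξ; linarith
  refine ⟨⟨tri_F2 hT, ?_, ?_⟩, ?_, ?_⟩
  · intro x y z; simp only [F2]; ring
  · intro x y z; simp only [F2, hηφ, hξ1, hxiend]; ring
  · funext x y z
    simp [hF, F2, acm_eta_h hac]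
  · intro y z; simp only [F2, hw, mul_zero, sub_zero, zero_sub, neg_zero, sub_self]

lemma vf_decomp (hac : ACM n φ ξ η) (hv : MemVF φ ξ η F) :
    F = F1 ξ η F + F2 ξ η F := by
  funext x y z
  have d := vf_shape hac hv x y z
  simp only [Pi.add_apply, F1, F2]
  linarith

/-- `L3 F x ξ z = F x ξ z` for `F ∈ v𝔽`. -/
lemma L3_mid (hac : ACM n φ ξ η) (hv : MemVF φ ξ η F) (x z : V) :
    L3 ξ η F x ξ z = F x ξ z := by
  obtain ⟨⟨hT, ha, -⟩, -, hw⟩ := hv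
  have hxiend : F x ξ ξ = 0 := by have := ha x ξ ξ; linarith
  rw [L3_apply, acm_eta_xi hac, hxiend, hw]; ring

lemma L3_left (hac : ACM n φ ξ η) (hv : MemVF φ ξ η F) (y z : V) :
    L3 ξ η F ξ y z = -F ξ y z := by
  obtain ⟨-, -, hw⟩ := hv
  rw [L3_apply, acm_eta_xi hac, hw, hw]; ring

lemma L3_memVF (hac : ACM n φ ξ η) (hv : MemVF φ ξ η F) :
    MemVF φ ξ η (L3 ξ η F) := by
  obtain ⟨⟨hT, ha, hrel⟩, hh, hw⟩ := hv
  have hηφ := hac.2.2.2.1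
  have hξ1 := acm_eta_xi hac
  have hxiend : ∀ u, F u ξ ξ = 0 := fun u => by have := ha u ξ ξ; linarith
  have hmidxi : ∀ y, F ξ y ξ = 0 := fun y => by rw [ha ξ y ξ, hw y]; ring
  refine ⟨⟨?_, ?_, ?_⟩, ?_, ?_⟩
  · exact ⟨fun y z => isLinearMap_sub' ((tri_F2 hT).1 y z) ((tri_F1 hT).1 y z),
      fun x z => isLinearMap_sub' ((tri_F2 hT).2.1 x z) ((tri_F1 hT).2.1 x z),
      fun x y => isLinearMap_sub' ((tri_F2 hT).2.2 x y) ((tri_F1 hT).2.2 x y)⟩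
  · intro x y z
    rw [L3_apply, L3_apply]
    linear_combination (-(η x)) * ha ξ y z
  · intro x y z
    have hr : F ξ y z = -F ξ (φ y) (φ z) := by
      have := hrel ξ y z
      rw [hw z, hmidxi y] at this; linarith
    simp only [L3_apply, hηφ, hξ1, hxiend, hw, hmidxi]
    linear_combination (-(η x)) * hr
  · funext x y z
    simp [hF, L3_apply, acm_eta_h hac]
  · intro z
    rw [L3_apply, hξ1, hw, hw ξ]; ring

end AuxL3b
theorem stmt11 (n : ℕ) (φ : V →ₗ[ℝ] V) (ξ : V) (η : V →ₗ[ℝ] ℝ)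
    (hacm : ACM n φ ξ η) (e : OrthonormalBasis (Fin (2 * n + 1)) ℝ V) :
    (∀ F, MemVF φ ξ η F → MemVF φ ξ η (L3 ξ η F)) ∧
    (∀ (a : ℝ) (F G : V → V → V → ℝ),
      L3 ξ η (fun x y z => a * F x y z + G x y z) =
        fun x y z => a * L3 ξ η F x y z + L3 ξ η G x y z) ∧
    (∀ F, MemVF φ ξ η F → L3 ξ η (L3 ξ η F) = F) ∧
    (∀ F G, MemVF φ ξ η F → MemVF φ ξ η G →
      innerF e (L3 ξ η F) (L3 ξ η G) = innerF e F G) ∧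
    (∀ A : V ≃ₗᵢ[ℝ] V, (∀ x, A (φ x) = φ (A x)) → A ξ = ξ →
      ∀ F, MemVF φ ξ η F → L3 ξ η (actA A F) = actA A (L3 ξ η F)) ∧
    (∀ F, MemVF φ ξ η F →
      (L3 ξ η F = -F ↔ MemF8sub φ ξ η F) ∧
      (L3 ξ η F = F ↔ MemVF' φ ξ η F)) ∧
    (∀ F, MemVF φ ξ η F →
      MemF8sub φ ξ η (F1 ξ η F) ∧ MemVF' φ ξ η (F2 ξ η F) ∧
        F = F1 ξ η F + F2 ξ η F) ∧
    (∀ F, MemVF φ ξ η F →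
      ∃! p : (V → V → V → ℝ) × (V → V → V → ℝ),
        MemF8sub φ ξ η p.1 ∧ MemVF' φ ξ η p.2 ∧ F = p.1 + p.2) ∧
    (∀ F G, MemF8sub φ ξ η F → MemVF' φ ξ η G → innerF e F G = 0) := by
  have hξ1 := acm_eta_xi hacm
  refine ⟨fun F hv => L3_memVF hacm hv, ?_, ?_, ?_, ?_, ?_, ?_, ?_,
    fun F G h8 hv => ortho_f8_vf' hacm e h8 hv⟩
  · -- linearity
    intro a F G
    funext x y z
    simp only [L3, F1, F2]
    ring
  · -- involution
    intro F hv
    funext x y z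
    rw [L3_apply, L3_mid hacm hv, L3_mid hacm hv, L3_left hacm hv]
    have d := vf_shape hacm hv x y z
    linarith
  · -- isometry
    intro F G hvF hvG
    have dF := vf_shape hacm hvF
    have dG := vf_shape hacm hvG
    have point : ∀ x y z, L3 ξ η F x y z * L3 ξ η G x y z =
        F x y z * G x y z - 2 * (F1 ξ η F x y z * F2 ξ η G x y z)
          - 2 * (F2 ξ η F x y z * F1 ξ η G x y z) := by
      intro x y z
      simp only [L3_apply, F1, F2]
      rw [dF x y z, dG x y z]
      ring
    have expand : innerF e (L3 ξ η F) (L3 ξ η G) = innerF e F G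
        - 2 * innerF e (F1 ξ η F) (F2 ξ η G)
        - 2 * innerF e (F2 ξ η F) (F1 ξ η G) := by
      simp only [innerF, Finset.mul_sum, ← Finset.sum_sub_distrib]
      exact Finset.sum_congr rfl fun i _ => Finset.sum_congr rfl fun j _ =>
        Finset.sum_congr rfl fun k _ => point _ _ _
    rw [expand, ortho_f8_vf' hacm e (F1_mem hacm hvF) (F2_mem hacm hvG),
      show innerF e (F2 ξ η F) (F1 ξ η G) = 0 from by
        rw [innerF_comm]; exact ortho_f8_vf' hacm e (F1_mem hacm hvG) (F2_mem hacm hvF)]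
    ring
  · -- commutes with the action of A
    intro A hAφ hAξ F hv
    have hAs : A.symm ξ = ξ := by
      have h := congrArg A.symm hAξ
      rw [A.symm_apply_apply] at h
      exact h.symm
    have hηA : ∀ x, η (A.symm x) = η x := by
      intro x
      calc η (A.symm x) = ⟪A.symm x, A.symm ξ⟫ := by rw [hAs, ← acm_eta_eq hacm]
        _ = ⟪x, ξ⟫ := A.symm.inner_map_map x ξ
        _ = η x := (acm_eta_eq hacm x).symm
    funext x y z
    simp only [L3, F1, F2, actA, hAs, hηA]
  · -- eigenspace characterizations
    intro F hv
    obtain ⟨⟨hT, ha, hrel⟩, hh, hw⟩ := hv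
    have hv' : MemVF φ ξ η F := ⟨⟨hT, ha, hrel⟩, hh, hw⟩
    constructor
    · constructor
      · intro hL
        have hmid : ∀ x z, F x ξ z = 0 := by
          intro x z
          have h1 := congrFun (congrFun (congrFun hL x) ξ) z
          rw [L3_mid hacm hv'] at h1
          simp only [Pi.neg_apply] at h1
          linarith
        refine ⟨⟨hT, ha, hrel⟩, hh, fun x y => ?_⟩
        rw [ha x y ξ, hmid]; ring
      · intro h8
        have hmid : ∀ x z, F x ξ z = 0 := fun x z => by
          rw [ha x ξ z, h8.2.2 x z]; ring
        funext x y z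
        simp only [Pi.neg_apply]
        rw [L3_apply, hmid, hmid]
        have d := vf_shape hacm hv' x y z
        rw [hmid, hmid] at d
        linarith
    · constructor
      · intro hL
        have hleft : ∀ y z, F ξ y z = 0 := by
          intro y z
          have h1 := congrFun (congrFun (congrFun hL ξ) y) z
          rw [L3_left hacm hv'] at h1
          linarith
        exact ⟨⟨hT, ha, hrel⟩, hh, hleft⟩
      · intro hvf'
        funext x y z
        rw [L3_apply, hvf'.2.2]
        have d := vf_shape hacm hv' x y z
        rw [hvf'.2.2] at d
        linarith
  · -- components
    exact fun F hv => ⟨F1_mem hacm hv, F2_mem hacm hv, vf_decomp hacm hv⟩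
  · -- unique decomposition
    intro F hv
    refine ⟨(F1 ξ η F, F2 ξ η F), ⟨F1_mem hacm hv, F2_mem hacm hv, vf_decomp hacm hv⟩, ?_⟩
    rintro ⟨q1, q2⟩ ⟨hq1, hq2, hq⟩
    dsimp only at hq1 hq2 hq
    have sh1 := f8_shape hacm hq1
    have q2l : ∀ y z, q2 ξ y z = 0 := hq2.2.2
    have hq' : ∀ x y z, F x y z = q1 x y z + q2 x y z := by
      intro x y z
      have := congrFun (congrFun (congrFun hq x) y) z
      rwa [Pi.add_apply, Pi.add_apply, Pi.add_apply] at this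
    have e1 : ∀ y z, q1 ξ y z = F ξ y z := by
      intro y z
      have := hq' ξ y z
      rw [q2l] at this
      linarith
    have hq1eq : q1 = F1 ξ η F := by
      funext x y z
      rw [sh1 x y z, e1 y z]; rfl
    have hq2eq : q2 = F2 ξ η F := by
      funext x y z
      have d := congrFun (congrFun (congrFun (vf_decomp hacm hv) x) y) z
      rw [Pi.add_apply, Pi.add_apply, Pi.add_apply] at d
      have h1 := hq' x y z
      have h2 : q1 x y z = F1 ξ η F x y z := congrFun (congrFun (congrFun hq1eq x) y) z
      linarith
    exact Prod.ext hq1eq hq2eq
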